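/- arXiv:1203.2207 — 5 statements merged into one kernel-verified Lean document; each statement's English description precedes it below -/
import Mathlib

section
/- Let H be a real Hilbert space (the flat model of the Hilbertian manifold M), F a real Hilbert space (the fiber of the bundle E), let s : H → F and f : H → ℝ be Fréchet differentiable at a point x₀ with s(x₀) = 0, and suppose the derivative Ds(x₀) : H →L[ℝ] F is surjective. Define F̃ : H × F → ℝ by F̃(x, y) = f(x) + ⟪y, s(x)⟫. Then the following are equivalent: (i) the differential Df(x₀) vanishes on the kernel of Ds(x₀); (ii) there exists y₀ ∈ F such that (x₀, y₀) is a critical point of F̃, i.e. the Fréchet derivative of F̃ at (x₀, y₀) is zero. -/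
open scoped RealInnerProductSpace

/-!
The partial derivative of `F̃(x, y) = f x + ⟪y, s x⟫` in `y` at `(x₀, y₀)` is `⟪·, s x₀⟫ = 0`, and
in `x` it is `Df + ⟪y₀, Ds ·⟫`. So `(x₀, y₀)` is critical iff `Df = -⟪y₀, Ds ·⟫`, and such a `y₀`
exists iff `Df` vanishes on `ker Ds`: by the open mapping theorem a surjective `Ds` is a quotient
map, so a functional vanishing on its kernel factors continuously through it, and the Riesz
representation of the factor gives `-y₀`.
-/

namespace ContinuousLinearMap

variable {𝕜 E F G : Type*} [NontriviallyNormedField 𝕜]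
  [NormedAddCommGroup E] [NormedSpace 𝕜 E] [CompleteSpace E]
  [NormedAddCommGroup F] [NormedSpace 𝕜 F] [CompleteSpace F]
  [AddCommGroup G] [Module 𝕜 G] [TopologicalSpace G]

theorem exists_comp_eq_of_ker_le (A : E →L[𝕜] F) (hA : Function.Surjective A) (B : E →L[𝕜] G)
    (h : A.ker ≤ B.ker) : ∃ C : F →L[𝕜] G, C.comp A = B := by
  obtain ⟨R, hR⟩ := (A : E →ₗ[𝕜] F).exists_rightInverse_of_surjective
    (LinearMap.range_eq_top.2 hA)
  have hcomp : ∀ v, B (R (A v)) = B v := fun v => by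
    have hker : v - R (A v) ∈ A.ker := by
      simpa [sub_eq_zero] using (LinearMap.congr_fun hR (A v)).symm
    have hB := h hker
    rw [LinearMap.mem_ker, map_sub, sub_eq_zero] at hB
    exact hB.symm
  have hcont : Continuous ((B : E →ₗ[𝕜] G) ∘ₗ R) := by
    rw [(A.isQuotientMap hA).continuous_iff]
    simpa only [Function.comp_def, LinearMap.comp_apply, coe_coe, hcomp] using B.continuous
  exact ⟨⟨_, hcont⟩, ext hcomp⟩

end ContinuousLinearMap

theorem exists_add_innerSL_comp_eq_zero_of_ker_le {H F : Type*} [NormedAddCommGroup H]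
    [InnerProductSpace ℝ H] [CompleteSpace H] [NormedAddCommGroup F] [InnerProductSpace ℝ F]
    [CompleteSpace F] (Ds : H →L[ℝ] F) (hsurj : Function.Surjective Ds)
    (Df : H →L[ℝ] ℝ) (h : Ds.ker ≤ Df.ker) : ∃ y : F, Df + (innerSL ℝ y).comp Ds = 0 := by
  obtain ⟨C, hC⟩ := Ds.exists_comp_eq_of_ker_le hsurj Df h
  refine ⟨-(InnerProductSpace.toDual ℝ F).symm C, ?_⟩
  ext v
  simp [← hC]

theorem hasFDerivAt_add_inner_snd {H F : Type*} [NormedAddCommGroup H] [NormedSpace ℝ H]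
    [NormedAddCommGroup F] [InnerProductSpace ℝ F]
    {s : H → F} {f : H → ℝ} {x₀ : H} {Ds : H →L[ℝ] F} {Df : H →L[ℝ] ℝ}
    (hs : HasFDerivAt s Ds x₀) (hf : HasFDerivAt f Df x₀) (y₀ : F) :
    HasFDerivAt (fun z : H × F => f z.1 + ⟪z.2, s z.1⟫)
      ((Df + (innerSL ℝ y₀).comp Ds).comp (ContinuousLinearMap.fst ℝ H F)
        + (innerSL ℝ (s x₀)).comp (ContinuousLinearMap.snd ℝ H F)) (x₀, y₀) := by
  have hs₁ : HasFDerivAt (fun z : H × F => s z.1) (Ds.comp (.fst ℝ H F)) (x₀, y₀) :=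
    hs.comp _ hasFDerivAt_fst
  refine ((hf.comp _ hasFDerivAt_fst).add (hasFDerivAt_snd.inner ℝ hs₁)).congr_fderiv ?_
  refine ContinuousLinearMap.ext fun ⟨v, w⟩ => ?_
  simp [real_inner_comm, add_assoc]

/-- The Lagrange multiplier theorem of Appendix A (Thm. LMT) in the flat Hilbert-space
setting: for `s : H → F` and `f : H → ℝ` differentiable at `x₀` with `s x₀ = 0` and
`Ds := Ds(x₀)` surjective, the differential of `f` at `x₀` vanishes on `ker Ds` if and
only if there is a multiplier `y₀ ∈ F` making `(x₀, y₀)` a critical point of the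
extended functional `F̃(x, y) = f x + ⟪y, s x⟫`. -/
theorem lagrange_multiplier_iff_critical_point
    {H F : Type*} [NormedAddCommGroup H] [InnerProductSpace ℝ H] [CompleteSpace H]
    [NormedAddCommGroup F] [InnerProductSpace ℝ F] [CompleteSpace F]
    (s : H → F) (f : H → ℝ) (x₀ : H) (Ds : H →L[ℝ] F) (Df : H →L[ℝ] ℝ)
    (hs : HasFDerivAt s Ds x₀) (hf : HasFDerivAt f Df x₀)
    (hx₀ : s x₀ = 0) (hsurj : Function.Surjective Ds) :
    (∀ v : H, Ds v = 0 → Df v = 0) ↔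
      ∃ y₀ : F, HasFDerivAt (fun z : H × F => f z.1 + ⟪z.2, s z.1⟫)
        (0 : H × F →L[ℝ] ℝ) (x₀, y₀) := by
  have hderiv (y₀ : F) := hasFDerivAt_add_inner_snd hs hf y₀
  simp only [hx₀, map_zero, ContinuousLinearMap.zero_comp, add_zero] at hderiv
  constructor
  · intro h
    obtain ⟨y₀, hy₀⟩ := exists_add_innerSL_comp_eq_zero_of_ker_le Ds hsurj Df h
    exact ⟨y₀, by simpa [hy₀] using hderiv y₀⟩
  · rintro ⟨y₀, hcrit⟩ v hv
    simpa [hv] using congr($((hderiv y₀).unique hcrit) (v, 0))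
end

section
/- Let x, p, ω : ℝ → Matrix (Fin 3) (Fin 3) ℝ be differentiable curves of 3×3 real matrices and let J : Matrix (Fin 3) (Fin 3) ℝ →ₗ[ℝ] Matrix (Fin 3) (Fin 3) ℝ be a linear map. Suppose for all t: x'(t) = x(t) * ω(t), p'(t) = p(t) * ω(t), (ω(t))ᵀ = −ω(t), and (x(t))ᵀ * p(t) − (p(t))ᵀ * x(t) = J(ω(t)). Then ω satisfies Euler's rigid body equation: for all t, J(ω'(t)) = J(ω(t)) * ω(t) − ω(t) * J(ω(t)). -/
open Matrix

attribute [local instance] Matrix.normedAddCommGroup Matrix.normedSpace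

/-!
Differentiating the constraint `xᵀp − pᵀx = Jω` along the Pontryagin flow `ẋ = xω`, `ṗ = pω`
gives `ωᵀ(Jω) + (Jω)ω`, which is the commutator `[Jω, ω]` because `ω` is antisymmetric. Since
`J` is linear, the derivative of `Jω` is `Jω̇`, and uniqueness of derivatives gives Euler's
equation.
-/

section Calculus

variable {𝕜 : Type*} [NontriviallyNormedField 𝕜] [CompleteSpace 𝕜]

theorem LinearMap.hasDerivAt_comp {E F : Type*} [NormedAddCommGroup E] [NormedSpace 𝕜 E]
    [FiniteDimensional 𝕜 E] [NormedAddCommGroup F] [NormedSpace 𝕜 F]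
    (L : E →ₗ[𝕜] F) {f : 𝕜 → E} {f' : E} {t : 𝕜} (hf : HasDerivAt f f' t) :
    HasDerivAt (fun s => L (f s)) (L f') t :=
  L.toContinuousLinearMap.hasFDerivAt.comp_hasDerivAt t hf

variable {l m n : Type*} [Fintype l] [Fintype m] [Fintype n] {t : 𝕜}

theorem HasDerivAt.matrix_transpose {u : 𝕜 → Matrix m n 𝕜} {u' : Matrix m n 𝕜}
    (hu : HasDerivAt u u' t) : HasDerivAt (fun s => (u s)ᵀ) u'ᵀ t :=
  (transposeLinearEquiv m n 𝕜 𝕜).toLinearMap.hasDerivAt_comp hu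

theorem HasDerivAt.matrix_mul {u : 𝕜 → Matrix l m 𝕜} {v : 𝕜 → Matrix m n 𝕜}
    {u' : Matrix l m 𝕜} {v' : Matrix m n 𝕜} (hu : HasDerivAt u u' t) (hv : HasDerivAt v v' t) :
    HasDerivAt (fun s => u s * v s) (u' * v t + u t * v') t := by
  rw [add_comm]
  exact (mulLinearMap 𝕜).toContinuousBilinearMap.hasDerivAt_of_bilinear (fun _ => hu) (fun _ => hv)

theorem HasDerivAt.matrix_transpose_mul_sub {x p : 𝕜 → Matrix m n 𝕜} {ω : Matrix n n 𝕜}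
    (hx : HasDerivAt x (x t * ω) t) (hp : HasDerivAt p (p t * ω) t) :
    HasDerivAt (fun s => (x s)ᵀ * p s - (p s)ᵀ * x s)
      (ωᵀ * ((x t)ᵀ * p t - (p t)ᵀ * x t) + ((x t)ᵀ * p t - (p t)ᵀ * x t) * ω) t := by
  refine ((hx.matrix_transpose.matrix_mul hp).fun_sub
    (hp.matrix_transpose.matrix_mul hx)).congr_deriv ?_
  simp only [transpose_mul, Matrix.mul_assoc, Matrix.mul_sub, Matrix.sub_mul]
  abel

end Calculus

/-- Rigid body example (Section 7.1, group SO(3)): solutions of the Pontryagin equations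
`ẋ = xω`, `ṗ = pω` with antisymmetric `ω` subject to the feedback constraint
`xᵀp − pᵀx = Jω` satisfy Euler's equations `J ω̇ = [Jω, ω]`. -/
theorem euler_equation_of_pontryagin
    (x p ω ω' : ℝ → Matrix (Fin 3) (Fin 3) ℝ)
    (J : Matrix (Fin 3) (Fin 3) ℝ →ₗ[ℝ] Matrix (Fin 3) (Fin 3) ℝ)
    (hx : ∀ t, HasDerivAt x (x t * ω t) t)
    (hp : ∀ t, HasDerivAt p (p t * ω t) t)
    (hω : ∀ t, HasDerivAt ω (ω' t) t)
    (hskew : ∀ t, (ω t)ᵀ = -(ω t))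
    (hcon : ∀ t, (x t)ᵀ * p t - (p t)ᵀ * x t = J (ω t)) :
    ∀ t : ℝ, J (ω' t) = J (ω t) * ω t - ω t * J (ω t) := by
  intro t
  have hmomentum := (hx t).matrix_transpose_mul_sub (hp t)
  simp only [hcon, hskew] at hmomentum
  rw [(J.hasDerivAt_comp (hω t)).unique hmomentum]
  noncomm_ring
end

section
/- Let x, p, ξ : ℝ → Matrix (Fin 2) (Fin 2) ℂ be differentiable curves of 2×2 complex matrices and let J be a real-linear map on Matrix (Fin 2) (Fin 2) ℂ. Suppose for all t: x'(t) = x(t) * ξ(t), p'(t) = p(t) * ξ(t), ξ(t) is skew-hermitian, i.e. (ξ(t))ᴴ = −ξ(t) (conjugate transpose), and (x(t))ᴴ * p(t) − (p(t))ᴴ * x(t) = J(ξ(t)). Then for all t, J(ξ'(t)) = J(ξ(t)) * ξ(t) − ξ(t) * J(ξ(t)). -/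
/-!
Along the flows `ẋ = xξ`, `ṗ = pξ` the quantity `M = xᴴp − pᴴx` has derivative `ξᴴM + Mξ`,
which is `Mξ − ξM` because `ξ` is skew-hermitian. Since `M = Jξ` at all times and `J` is linear,
hence commutes with `d/dt`, this is the Euler equation `Jξ̇ = [Jξ, ξ]`.
-/

open Matrix

attribute [local instance] Matrix.normedAddCommGroup Matrix.normedSpace

section Calculus

variable {𝕜 : Type*} [NontriviallyNormedField 𝕜] {l m n : Type*} {x : 𝕜}

section NormedSpace

variable {E : Type*} [NormedAddCommGroup E] [NormedSpace 𝕜 E] [Fintype n]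

theorem hasDerivAt_matrix {f : 𝕜 → Matrix m n E} {f' : Matrix m n E} :
    HasDerivAt f f' x ↔ ∀ i j, HasDerivAt (fun y => f y i j) (f' i j) x :=
  hasDerivAt_pi.trans (forall_congr' fun _ => hasDerivAt_pi)

theorem HasDerivAt.matrix_conjTranspose [Fintype m] [StarRing 𝕜] [TrivialStar 𝕜]
    [StarAddMonoid E] [StarModule 𝕜 E] [ContinuousStar E] {f : 𝕜 → Matrix m n E}
    {f' : Matrix m n E} (hf : HasDerivAt f f' x) : HasDerivAt (fun y => (f y)ᴴ) f'ᴴ x :=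
  hasDerivAt_matrix.2 fun i j => (hasDerivAt_matrix.1 hf j i).star

end NormedSpace

theorem HasDerivAt.matrix_mul_s6 {R : Type*} [NormedRing R] [NormedAlgebra 𝕜 R] [Fintype m]
    [Fintype n] {f : 𝕜 → Matrix l m R} {g : 𝕜 → Matrix m n R} {f' : Matrix l m R}
    {g' : Matrix m n R} (hf : HasDerivAt f f' x) (hg : HasDerivAt g g' x) :
    HasDerivAt (fun y => f y * g y) (f' * g x + f x * g') x := by
  rw [hasDerivAt_matrix] at hf hg ⊢
  intro i j
  simp only [mul_apply, Matrix.add_apply, ← Finset.sum_add_distrib]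
  exact HasDerivAt.fun_sum fun k _ => (hf i k).fun_mul (hg k j)

end Calculus

theorem conjTranspose_mul_sub_conjTranspose_mul_right_skew {R : Type*} [Ring R] [StarRing R]
    {m n : Type*} [Fintype m] [Fintype n] (x p : Matrix m n R) {ξ : Matrix n n R}
    (hξ : ξᴴ = -ξ) :
    (x * ξ)ᴴ * p + xᴴ * (p * ξ) - ((p * ξ)ᴴ * x + pᴴ * (x * ξ)) =
      (xᴴ * p - pᴴ * x) * ξ - ξ * (xᴴ * p - pᴴ * x) := by
  simp only [conjTranspose_mul, hξ, Matrix.sub_mul, Matrix.mul_sub, Matrix.mul_assoc,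
    Matrix.neg_mul]
  abel

theorem HasDerivAt.conjTranspose_mul_sub_conjTranspose_mul_of_right_skew
    {𝕜 : Type*} [NontriviallyNormedField 𝕜] [StarRing 𝕜] [TrivialStar 𝕜]
    {R : Type*} [NormedRing R] [NormedAlgebra 𝕜 R] [StarRing R] [StarModule 𝕜 R]
    [ContinuousStar R] {m n : Type*} [Fintype m] [Fintype n]
    {x p : 𝕜 → Matrix m n R} {ξ : 𝕜 → Matrix n n R} {t : 𝕜}
    (hx : HasDerivAt x (x t * ξ t) t) (hp : HasDerivAt p (p t * ξ t) t) (hξ : (ξ t)ᴴ = -ξ t) :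
    HasDerivAt (fun s => (x s)ᴴ * p s - (p s)ᴴ * x s)
      (((x t)ᴴ * p t - (p t)ᴴ * x t) * ξ t - ξ t * ((x t)ᴴ * p t - (p t)ᴴ * x t)) t := by
  rw [← conjTranspose_mul_sub_conjTranspose_mul_right_skew _ _ hξ]
  exact (hx.matrix_conjTranspose.matrix_mul_s6 hp).sub (hp.matrix_conjTranspose.matrix_mul_s6 hx)

/-- Rigid body example for the group SU(2) (Section 7.1.2): the Pontryagin equations
`ẋ = xξ`, `ṗ = pξ` with `ξ(t)` skew-hermitian and the feedback constraint
`xᴴp − pᴴx = Jξ` imply the Euler equations `J ξ̇ = [Jξ, ξ]`. -/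
theorem euler_equation_of_pontryagin_su2
    (x p ξ ξ' : ℝ → Matrix (Fin 2) (Fin 2) ℂ)
    (J : Matrix (Fin 2) (Fin 2) ℂ →ₗ[ℝ] Matrix (Fin 2) (Fin 2) ℂ)
    (hx : ∀ t, HasDerivAt x (x t * ξ t) t)
    (hp : ∀ t, HasDerivAt p (p t * ξ t) t)
    (hξ : ∀ t, HasDerivAt ξ (ξ' t) t)
    (hskew : ∀ t, (ξ t)ᴴ = -(ξ t))
    (hcon : ∀ t, (x t)ᴴ * p t - (p t)ᴴ * x t = J (ξ t)) :
    ∀ t : ℝ, J (ξ' t) = J (ξ t) * ξ t - ξ t * J (ξ t) := by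
  intro t
  have hJξ : HasDerivAt (fun s => J (ξ s)) (J (ξ' t)) t :=
    J.toContinuousLinearMap.hasFDerivAt.comp_hasDerivAt t (hξ t)
  have hconstraint :=
    (hx t).conjTranspose_mul_sub_conjTranspose_mul_of_right_skew (hp t) (hskew t)
  simp only [hcon] at hconstraint
  exact hJξ.unique hconstraint
end

section
/- Let ξ₊, ξ₋, ξ₀ ∈ ℝ and let ξ be the 2×2 complex matrix ξ = ξ₊e₊ + ξ₋e₋ + ξ₀e₀ = !![i·ξ₀, ξ₊ + i·ξ₋; −ξ₊ + i·ξ₋, −i·ξ₀] in su(2). For x ∈ ℂ define φ : ℝ → ℂ by φ(t) = (d(t)·x − b(t)) / (−c(t)·x + a(t)), where !![a(t), b(t); c(t), d(t)] = exp(−t • ξ) is the matrix exponential. Then φ has derivative at t = 0 equal to (ξ₊ − i·ξ₋)·x² + 2i·ξ₀·x + (ξ₊ + i·ξ₋). -/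
/-!
At `t = 0` the curve `g t = exp (-t • ξ)` passes through the identity with velocity `-ξ`.
Differentiating the Moebius map `x ↦ (d x - b) / (-c x + a)` along any curve through the identity
with velocity `g'` gives the quadratic `g'₁₀ x² + (g'₁₁ - g'₀₀) x - g'₀₁`; for `g' = -ξ` this is
the Riccati field.
-/

open Matrix Complex

theorem hasDerivAt_exp_neg_smul_const {𝕂 𝔸 : Type*} [RCLike 𝕂] [NormedRing 𝔸]
    [NormedAlgebra 𝕂 𝔸] [CompleteSpace 𝔸] (A : 𝔸) (t : 𝕂) :
    HasDerivAt (fun u : 𝕂 => NormedSpace.exp ((-u) • A)) (-(NormedSpace.exp ((-t) • A) * A)) t := by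
  simpa [Function.comp_def] using (hasDerivAt_exp_smul_const A (-t)).scomp t (hasDerivAt_neg t)

theorem hasDerivAt_moebius_adjugate {𝕜 𝕜' : Type*} [NontriviallyNormedField 𝕜]
    [NontriviallyNormedField 𝕜'] [NormedAlgebra 𝕜 𝕜'] {g : 𝕜 → Matrix (Fin 2) (Fin 2) 𝕜'}
    {g' : Matrix (Fin 2) (Fin 2) 𝕜'} {t : 𝕜} (hg : HasDerivAt g g' t) (hgt : g t = 1) (x : 𝕜') :
    HasDerivAt (fun s => (g s 1 1 * x - g s 0 1) / (-g s 1 0 * x + g s 0 0))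
      (g' 1 0 * x ^ 2 + (g' 1 1 - g' 0 0) * x - g' 0 1) t := by
  have entry (i j : Fin 2) : HasDerivAt (fun s => g s i j) (g' i j) t :=
    hasDerivAt_pi.1 (hasDerivAt_pi.1 hg i) j
  have hnum : HasDerivAt (fun s => g s 1 1 * x - g s 0 1) (g' 1 1 * x - g' 0 1) t :=
    ((entry 1 1).mul_const x).sub (entry 0 1)
  have hden : HasDerivAt (fun s => -g s 1 0 * x + g s 0 0) (-g' 1 0 * x + g' 0 0) t :=
    ((entry 1 0).neg.mul_const x).add (entry 0 0)
  have hnum_t : g t 1 1 * x - g t 0 1 = x := by simp [hgt]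
  have hden_t : -g t 1 0 * x + g t 0 0 = 1 := by simp [hgt]
  refine (hnum.div hden ?_).congr_deriv ?_
  · rw [hden_t]
    exact one_ne_zero
  · rw [hnum_t, hden_t]
    ring

/- Matrices carry no global norm. Any normed-algebra structure serves to differentiate `exp`:
the statement only sees its topology, which is the product topology. -/
attribute [local instance] Matrix.linftyOpNormedRing Matrix.linftyOpNormedAlgebra

/-- Riccati example for SU(2) (Section 7.2.2): the fundamental vector field of
`ξ = ξ₊e₊ + ξ₋e₋ + ξ₀e₀ = !![iξ₀, ξ₊ + iξ₋; −ξ₊ + iξ₋, −iξ₀] ∈ su(2)` for the Moebius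
action `x·g⁻¹ = (dx − b)/(−cx + a)` on `ℂ` is the complex Riccati field
`(ξ₊ − iξ₋)x² + 2iξ₀x + (ξ₊ + iξ₋)`. -/
theorem riccati_vector_field_su2
    (ξp ξm ξ0 : ℝ) (x : ℂ) (φ : ℝ → ℂ)
    (hφ : ∀ t : ℝ, φ t =
      ((NormedSpace.exp ((-t) • (!![I * ξ0, (ξp : ℂ) + I * ξm;
          -(ξp : ℂ) + I * ξm, -(I * ξ0)] : Matrix (Fin 2) (Fin 2) ℂ))) 1 1 * x -
        (NormedSpace.exp ((-t) • (!![I * ξ0, (ξp : ℂ) + I * ξm;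
          -(ξp : ℂ) + I * ξm, -(I * ξ0)] : Matrix (Fin 2) (Fin 2) ℂ))) 0 1) /
      (-(NormedSpace.exp ((-t) • (!![I * ξ0, (ξp : ℂ) + I * ξm;
          -(ξp : ℂ) + I * ξm, -(I * ξ0)] : Matrix (Fin 2) (Fin 2) ℂ))) 1 0 * x +
        (NormedSpace.exp ((-t) • (!![I * ξ0, (ξp : ℂ) + I * ξm;
          -(ξp : ℂ) + I * ξm, -(I * ξ0)] : Matrix (Fin 2) (Fin 2) ℂ))) 0 0)) :
    HasDerivAt φ (((ξp : ℂ) - I * ξm) * x ^ 2 + 2 * I * ξ0 * x + ((ξp : ℂ) + I * ξm)) 0 := by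
  set ξ : Matrix (Fin 2) (Fin 2) ℂ :=
    !![I * ξ0, (ξp : ℂ) + I * ξm; -(ξp : ℂ) + I * ξm, -(I * ξ0)]
  rw [funext hφ]
  have hexp := hasDerivAt_exp_neg_smul_const ξ (0 : ℝ)
  refine (hasDerivAt_moebius_adjugate hexp (by simp) x).congr_deriv ?_
  simp [ξ]
  ring
end

section
/- Let ξ₊, ξ₋, ξ₀ ∈ ℝ and let ξ be the 2×2 complex matrix ξ = ξ₊e₊ + ξ₋e₋ + ξ₀e₀ = !![i·ξ₊, i·ξ₋ − ξ₀; −i·ξ₋ − ξ₀, −i·ξ₊]. For x ∈ ℂ define φ : ℝ → ℂ by φ(t) = (d(t)·x − b(t)) / (−c(t)·x + a(t)), where !![a(t), b(t); c(t), d(t)] = exp(−t • ξ) is the matrix exponential. Then φ has derivative at t = 0 equal to (ξ₀ + i·ξ₋)·x² + 2i·ξ₊·x + (−ξ₀ + i·ξ₋). -/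
open Matrix Complex

/-! `φ` is a quotient of affine functions of the entries of `exp (t • (-ξ))`, whose derivative at
`t = 0` is `-ξ`; the quotient rule at the identity matrix then gives the Riccati polynomial. -/

theorem Matrix.hasDerivAt_exp_smul_apply_zero {n 𝕂 : Type*} [Fintype n] [DecidableEq n]
    [RCLike 𝕂] (A : Matrix n n 𝕂) (i j : n) :
    HasDerivAt (fun t : ℝ => NormedSpace.exp (t • A) i j) (A i j) 0 := by
  let : NormedRing (Matrix n n 𝕂) := Matrix.linftyOpNormedRing
  let : NormedAlgebra ℝ (Matrix n n 𝕂) := Matrix.linftyOpNormedAlgebra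
  have hexp := hasDerivAt_exp_smul_const (𝕂 := ℝ) A 0
  rw [zero_smul, NormedSpace.exp_zero, one_mul] at hexp
  exact (entryLinearMap ℝ 𝕂 i j).toContinuousLinearMap.hasFDerivAt.comp_hasDerivAt 0 hexp

-- `(d x - b) / (-c x + a)` is the Möbius transformation of the adjugate `!![d, -b; -c, a]` of `g`.
theorem hasDerivAt_moebius_adjugate_of_eq_one {𝕜 𝕜' : Type*} [NontriviallyNormedField 𝕜]
    [NontriviallyNormedField 𝕜'] [NormedAlgebra 𝕜 𝕜'] {g : 𝕜 → Matrix (Fin 2) (Fin 2) 𝕜'}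
    {g' : Matrix (Fin 2) (Fin 2) 𝕜'} {t₀ : 𝕜}
    (hg : ∀ i j, HasDerivAt (fun t => g t i j) (g' i j) t₀) (hg₀ : g t₀ = 1) (x : 𝕜') :
    HasDerivAt (fun t => (g t 1 1 * x - g t 0 1) / (-g t 1 0 * x + g t 0 0))
      (g' 1 0 * x ^ 2 + (g' 1 1 - g' 0 0) * x - g' 0 1) t₀ := by
  have hnum : HasDerivAt (fun t => g t 1 1 * x - g t 0 1) (g' 1 1 * x - g' 0 1) t₀ :=
    ((hg 1 1).mul_const x).sub (hg 0 1)
  have hden : HasDerivAt (fun t => -g t 1 0 * x + g t 0 0) (-g' 1 0 * x + g' 0 0) t₀ :=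
    ((hg 1 0).neg.mul_const x).add (hg 0 0)
  have hden₀ : -g t₀ 1 0 * x + g t₀ 0 0 = 1 := by simp [hg₀]
  convert hnum.fun_div hden (hden₀ ▸ one_ne_zero) using 1
  rw [hden₀, hg₀]
  simp
  ring

/-- Riccati example for SO(2,1) (Section 7.2.3): the fundamental vector field of
`ξ = ξ₊e₊ + ξ₋e₋ + ξ₀e₀ = !![iξ₊, iξ₋ − ξ₀; −iξ₋ − ξ₀, −iξ₊] ∈ so(2,1)` for the Moebius
action `x·g⁻¹ = (dx − b)/(−cx + a)` on `ℂ` is the Riccati field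
`(ξ₀ + iξ₋)x² + 2iξ₊x + (−ξ₀ + iξ₋)`. -/
theorem riccati_vector_field_so21
    (ξp ξm ξ0 : ℝ) (x : ℂ) (φ : ℝ → ℂ)
    (hφ : ∀ t : ℝ, φ t =
      ((NormedSpace.exp ((-t) • (!![I * ξp, I * ξm - (ξ0 : ℂ);
          -(I * ξm) - (ξ0 : ℂ), -(I * ξp)] : Matrix (Fin 2) (Fin 2) ℂ))) 1 1 * x -
        (NormedSpace.exp ((-t) • (!![I * ξp, I * ξm - (ξ0 : ℂ);
          -(I * ξm) - (ξ0 : ℂ), -(I * ξp)] : Matrix (Fin 2) (Fin 2) ℂ))) 0 1) /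
      (-(NormedSpace.exp ((-t) • (!![I * ξp, I * ξm - (ξ0 : ℂ);
          -(I * ξm) - (ξ0 : ℂ), -(I * ξp)] : Matrix (Fin 2) (Fin 2) ℂ))) 1 0 * x +
        (NormedSpace.exp ((-t) • (!![I * ξp, I * ξm - (ξ0 : ℂ);
          -(I * ξm) - (ξ0 : ℂ), -(I * ξp)] : Matrix (Fin 2) (Fin 2) ℂ))) 0 0)) :
    HasDerivAt φ (((ξ0 : ℂ) + I * ξm) * x ^ 2 + 2 * I * ξp * x + (-(ξ0 : ℂ) + I * ξm)) 0 := by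
  set ξ : Matrix (Fin 2) (Fin 2) ℂ :=
    !![I * ξp, I * ξm - (ξ0 : ℂ); -(I * ξm) - (ξ0 : ℂ), -(I * ξp)]
  simp_rw [neg_smul, ← smul_neg] at hφ
  have h := hasDerivAt_moebius_adjugate_of_eq_one
    (Matrix.hasDerivAt_exp_smul_apply_zero (-ξ)) (by rw [zero_smul, NormedSpace.exp_zero]) x
  rw [funext hφ]
  refine h.congr_deriv ?_
  simp [ξ]
  ring
end
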